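/- arXiv:1301.2182 — 2 statements merged into one kernel-verified Lean document; each statement's English description precedes it below -/
import Mathlib

section
/- Let η : [0,T) → ℝ be a continuously differentiable function with η(0) = 0, and suppose there exist a continuous function β : ℝ → ℝ with β(0) = 0 and β nonnegative on [0,∞), and a constant θ > 0, such that for all t ∈ [0,T), η'(t) ≥ -β(η(t)) - (1/θ)·η(t). If additionally β is locally Lipschitz, then η(t) ≥ 0 for all t ∈ [0,T). -/
/-!
Suppose `η t < 0` for some `t`, and let `c` be the last zero of `η` before `t`. Near `0`
the locally Lipschitz `β` satisfies `|β x| ≤ K |x|`, so just after `c`, where `η` is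
negative and small, the inequality becomes linear: `η' ≥ (K - 1/θ) η`. Hence
`η t · exp (-(K - 1/θ) t)` is nondecreasing there, starting from `0` at `c`, which
contradicts `η < 0` after `c`.
-/

open Set

open Filter Topology Asymptotics Real

theorem LocallyLipschitz.isBigO_sub {E F : Type*} [SeminormedAddCommGroup E]
    [SeminormedAddCommGroup F] {f : E → F} (hf : LocallyLipschitz f) (x₀ : E) :
    (fun x => f x - f x₀) =O[𝓝 x₀] (fun x => x - x₀) := by
  obtain ⟨K, U, hU, hK⟩ := hf x₀
  refine IsBigO.of_bound K ?_
  filter_upwards [hU] with x hx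
  simpa only [dist_eq_norm] using hK.dist_le_mul x hx x₀ (mem_of_mem_nhds hU)

theorem ContinuousOn.exists_eq_zero_forall_Ioc_neg {f : ℝ → ℝ} {a b : ℝ} (hab : a ≤ b)
    (hf : ContinuousOn f (Icc a b)) (ha : 0 ≤ f a) (hb : f b < 0) :
    ∃ c ∈ Ico a b, f c = 0 ∧ ∀ t ∈ Ioc c b, f t < 0 := by
  have hS : IsCompact (Icc a b ∩ f ⁻¹' Ici 0) :=
    isCompact_Icc.of_isClosed_subset
      (hf.preimage_isClosed_of_isClosed isClosed_Icc isClosed_Ici) inter_subset_left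
  obtain ⟨c, ⟨⟨hac, hcb⟩, hfc⟩, hmax⟩ :=
    hS.exists_isGreatest ⟨a, ⟨left_mem_Icc.2 hab, ha⟩⟩
  have hneg : ∀ t ∈ Ioc c b, f t < 0 := fun t ht =>
    not_le.1 fun h => ht.1.not_ge (hmax ⟨⟨hac.trans ht.1.le, ht.2⟩, h⟩)
  have hcb : c < b := hcb.lt_of_ne (by rintro rfl; exact hb.not_ge hfc)
  have hcont : ContinuousWithinAt f (Ioi c) c :=
    (continuousWithinAt_Ioc_iff_Ioi hcb).1
      ((hf c ⟨hac, hcb.le⟩).mono (Ioc_subset_Icc_self.trans (Icc_subset_Icc_left hac)))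
  have hfc' : f c ≤ 0 := le_of_tendsto hcont <| by
    filter_upwards [Ioc_mem_nhdsGT hcb] with t ht using (hneg t ht).le
  exact ⟨c, ⟨hac, hcb⟩, le_antisymm hfc' hfc, hneg⟩

theorem nonneg_of_mul_le_deriv {f f' : ℝ → ℝ} {a b C : ℝ} (hab : a ≤ b)
    (hf : ContinuousOn f (Icc a b)) (hf' : ∀ t ∈ Ioo a b, HasDerivAt f (f' t) t)
    (hC : ∀ t ∈ Ioo a b, C * f t ≤ f' t) (ha : 0 ≤ f a) : 0 ≤ f b := by
  have hmono : MonotoneOn (fun t => f t * exp (-C * t)) (Icc a b) := by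
    refine monotoneOn_of_hasDerivWithinAt_nonneg (convex_Icc a b) (hf.mul (by fun_prop))
      (f' := fun t => (f' t - C * f t) * exp (-C * t)) ?_ ?_ <;> rw [interior_Icc] <;>
      intro t ht
    · have hexp := ((hasDerivAt_id' t).const_mul (-C)).exp
      refine ((hf' t ht).mul hexp).hasDerivWithinAt.congr_deriv ?_
      ring
    · exact mul_nonneg (sub_nonneg.2 (hC t ht)) (exp_pos _).le
  have := hmono (left_mem_Icc.2 hab) (right_mem_Icc.2 hab) hab
  exact (mul_nonneg_iff_of_pos_right (exp_pos _)).1 ((mul_nonneg ha (exp_pos _).le).trans this)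

theorem stmt_0_general (T : ℝ) (η η' β : ℝ → ℝ) (θ : ℝ)
    (hη0 : η 0 = 0)
    (hderiv : ∀ t ∈ Ico (0:ℝ) T, HasDerivAt η (η' t) t)
    (hβ0 : β 0 = 0)
    (hβlip : LocallyLipschitz β)
    (hineq : ∀ t ∈ Ico (0:ℝ) T, -β (η t) - (1/θ) * η t ≤ η' t) :
    ∀ t ∈ Ico (0:ℝ) T, 0 ≤ η t := by
  have hβO : (fun x => β x) =O[𝓝 0] fun x => x := by
    simpa [hβ0] using hβlip.isBigO_sub 0
  rintro t ⟨ht0, htT⟩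
  by_contra! hneg
  have hsub : Icc 0 t ⊆ Ico 0 T := fun s hs => ⟨hs.1, hs.2.trans_lt htT⟩
  have hη : ∀ s ∈ Icc 0 t, HasDerivAt η (η' s) s := fun s hs => hderiv s (hsub hs)
  have hηcont : ContinuousOn η (Icc 0 t) := fun s hs =>
    (hη s hs).continuousAt.continuousWithinAt
  obtain ⟨c, ⟨hc0, hct⟩, hηc, hηneg⟩ :=
    hηcont.exists_eq_zero_forall_Ioc_neg ht0 hη0.ge hneg
  obtain ⟨K, hK⟩ :=
    (hβO.comp_tendsto (hηc ▸ (hη c ⟨hc0, hct.le⟩).continuousAt.tendsto)).bound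
  obtain ⟨d, hcd, hd⟩ := mem_nhdsGT_iff_exists_Ioo_subset.1 (nhdsWithin_le_nhds hK)
  set e := min d t
  have hce : c < e := lt_min hcd hct
  have hsub' : Icc c e ⊆ Icc 0 t := Icc_subset_Icc hc0 (min_le_right _ _)
  have hlin : ∀ s ∈ Ioo c e, (K - 1/θ) * η s ≤ η' s := by
    intro s hs
    have hβs : |β (η s)| ≤ K * |η s| := hd ⟨hs.1, hs.2.trans_le (min_le_left _ _)⟩
    have hηs : η s < 0 := hηneg s ⟨hs.1, hs.2.le.trans (min_le_right _ _)⟩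
    rw [abs_of_neg hηs] at hβs
    linarith [le_abs_self (β (η s)), hineq s (hsub (hsub' (Ioo_subset_Icc_self hs)))]
  have := nonneg_of_mul_le_deriv hce.le (hηcont.mono hsub')
    (fun s hs => hη s (hsub' (Ioo_subset_Icc_self hs))) hlin hηc.ge
  exact (hηneg e ⟨hce, min_le_right _ _⟩).not_ge this

theorem stmt_0 (T : ℝ) (η η' β : ℝ → ℝ) (θ : ℝ) (hθ : 0 < θ)
    (hη0 : η 0 = 0)
    (hderiv : ∀ t ∈ Ico (0:ℝ) T, HasDerivAt η (η' t) t)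
    (hη'cont : ContinuousOn η' (Ico (0:ℝ) T))
    (hβcont : Continuous β) (hβ0 : β 0 = 0)
    (hβpos : ∀ r : ℝ, 0 ≤ r → 0 ≤ β r)
    (hβlip : LocallyLipschitz β)
    (hineq : ∀ t ∈ Ico (0:ℝ) T, -β (η t) - (1/θ) * η t ≤ η' t) :
    ∀ t ∈ Ico (0:ℝ) T, 0 ≤ η t :=
  stmt_0_general T η η' β θ hη0 hderiv hβ0 hβlip hineq
end

section
/- Let V, η : [0,∞) → ℝ be differentiable with η ≥ 0, κ > 0, σ ∈ (0,1), λ = (1-σ)κ, and suppose: V'(t) ≤ -q(t) + p(t) and η'(t) = -λη(t) + σq(t) - p(t), where q(t) ≥ κV(t) ≥ 0 for all t. Then W(t) = V(t) + η(t) satisfies W'(t) ≤ (σ-1)κ·W(t), and hence V(t) ≤ (V(0) + η(0))·e^{(σ-1)κt} for all t ≥ 0. -/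
/-! The storage function `W = V + η` of the dynamic event generator satisfies the differential
inequality `W' ≤ (σ - 1) κ W`: the sampling-error term `p` cancels between `V'` and `η'`, and
`q ≥ κ V` with `λ = (1 - σ) κ` turns what is left into `(σ - 1) κ (V + η)`. Grönwall's inequality
then bounds `W`, and `V ≤ W` because `η ≥ 0`. -/

open Set

theorem le_mul_exp_of_hasDerivAt_le_mul {f f' : ℝ → ℝ} {a c : ℝ}
    (hf : ∀ t ∈ Ici a, HasDerivAt f (f' t) t) (hle : ∀ t ∈ Ici a, f' t ≤ c * f t) :
    ∀ t ∈ Ici a, f t ≤ f a * Real.exp (c * (t - a)) := by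
  intro t ht
  have hbound := le_gronwallBound_of_liminf_deriv_right_le (f' := f') (δ := f a) (K := c) (ε := 0)
    (fun x hx => (hf x hx.1).continuousAt.continuousWithinAt)
    (fun x hx _ hr => (hf x hx.1).hasDerivWithinAt.liminf_right_slope_le hr)
    le_rfl (fun x hx => by simpa using hle x hx.1) t ⟨ht, le_rfl⟩
  rwa [gronwallBound_ε0] at hbound

theorem eventTriggered_storage_rate_le {V η V' q p κ σ : ℝ} (hσ : σ ≤ 1)
    (hV' : V' ≤ -q + p) (hq : κ * V ≤ q) :
    V' + (-((1 - σ) * κ) * η + σ * q - p) ≤ (σ - 1) * κ * (V + η) := by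
  have hq' : (σ - 1) * q ≤ (σ - 1) * (κ * V) := mul_le_mul_of_nonpos_left hq (by linarith)
  linarith

theorem stmt_17_general (V η V' q p : ℝ → ℝ) (κ σ lam : ℝ)
    (hσ : σ ∈ Ioo (0:ℝ) 1) (hlam : lam = (1 - σ) * κ)
    (hηpos : ∀ t ∈ Ici (0:ℝ), 0 ≤ η t)
    (hVderiv : ∀ t ∈ Ici (0:ℝ), HasDerivAt V (V' t) t)
    (hVbound : ∀ t ∈ Ici (0:ℝ), V' t ≤ -q t + p t)
    (hηderiv : ∀ t ∈ Ici (0:ℝ),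
      HasDerivAt η (-lam * η t + σ * q t - p t) t)
    (hq : ∀ t ∈ Ici (0:ℝ), κ * V t ≤ q t) :
    (∀ t ∈ Ici (0:ℝ),
      V' t + (-lam * η t + σ * q t - p t) ≤ (σ - 1) * κ * (V t + η t)) ∧
    ∀ t ∈ Ici (0:ℝ), V t ≤ (V 0 + η 0) * Real.exp ((σ - 1) * κ * t) := by
  subst hlam
  have hW' : ∀ t ∈ Ici (0:ℝ), V' t + (-((1 - σ) * κ) * η t + σ * q t - p t) ≤
      (σ - 1) * κ * (V t + η t) :=
    fun t ht => eventTriggered_storage_rate_le hσ.2.le (hVbound t ht) (hq t ht)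
  refine ⟨hW', fun t ht => ?_⟩
  have hW := le_mul_exp_of_hasDerivAt_le_mul (f := fun t => V t + η t)
    (fun t ht => (hVderiv t ht).add (hηderiv t ht)) hW' t ht
  simp only [sub_zero] at hW
  linarith [hηpos t ht]

theorem stmt_17 (V η V' q p : ℝ → ℝ) (κ σ lam : ℝ)
    (hκ : 0 < κ) (hσ : σ ∈ Ioo (0:ℝ) 1) (hlam : lam = (1 - σ) * κ)
    (hηpos : ∀ t ∈ Ici (0:ℝ), 0 ≤ η t)
    (hVderiv : ∀ t ∈ Ici (0:ℝ), HasDerivAt V (V' t) t)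
    (hVbound : ∀ t ∈ Ici (0:ℝ), V' t ≤ -q t + p t)
    (hηderiv : ∀ t ∈ Ici (0:ℝ),
      HasDerivAt η (-lam * η t + σ * q t - p t) t)
    (hVpos : ∀ t ∈ Ici (0:ℝ), 0 ≤ V t)
    (hq : ∀ t ∈ Ici (0:ℝ), κ * V t ≤ q t) :
    (∀ t ∈ Ici (0:ℝ),
      V' t + (-lam * η t + σ * q t - p t) ≤ (σ - 1) * κ * (V t + η t)) ∧
    ∀ t ∈ Ici (0:ℝ), V t ≤ (V 0 + η 0) * Real.exp ((σ - 1) * κ * t) :=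
  stmt_17_general V η V' q p κ σ lam hσ hlam hηpos hVderiv hVbound hηderiv hq
end
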